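/- Let S be a Γ-graded semigroup with local units. Then the following are equivalent: (1) S is strongly graded; (2) S_α S_{α⁻¹} = S_ε for every α ∈ Γ; (3) S_α S_{α⁻¹} contains all the local units of S, for every α ∈ Γ. Moreover, if S is an inverse semigroup, these are also equivalent to: (4) E(S) = {s s⁻¹ | s ∈ S_α} for every α ∈ Γ; (5) E(S) = {s⁻¹ s | s ∈ S_α} for every α ∈ Γ; (6) for all u ∈ E(S) and α ∈ Γ there exists s ∈ S_α with u 𝓛 s; (7) for all u ∈ E(S) and α ∈ Γ there exists s ∈ S_α with u 𝓡 s. -/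

import Mathlib

open Pointwise

/-- A `Γ`-grading on a semigroup with zero `S`. -/
structure Grading (Γ : Type*) [Group Γ] (S : Type*) [SemigroupWithZero S] where
  deg : S → Γ
  deg_mul : ∀ s t : S, s * t ≠ 0 → deg (s * t) = deg s * deg t

namespace Grading

variable {Γ : Type*} [Group Γ] {S : Type*} [SemigroupWithZero S]

/-- The component `S_α = φ⁻¹(α) ∪ {0}` of a `Γ`-graded semigroup. -/
def comp (g : Grading Γ S) (α : Γ) : Set S := {s | s = 0 ∨ g.deg s = α}

/-- `S` is strongly graded if `S_α S_β = S_{αβ}` for all `α, β ∈ Γ`. -/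
def IsStrong (g : Grading Γ S) : Prop :=
  ∀ α β : Γ, g.comp α * g.comp β = g.comp (α * β)

end Grading

/-- `S` has local units: every element has an idempotent left and right local unit. -/
def HasLocalUnits (S : Type*) [SemigroupWithZero S] : Prop :=
  ∀ s : S, ∃ u v : S, u * u = u ∧ v * v = v ∧ u * s = s ∧ s * v = s

/-- Green's `𝓛` relation: `s 𝓛 t` iff `S¹s = S¹t`. -/
def GreenL (S : Type*) [SemigroupWithZero S] (s t : S) : Prop :=
  (s = t ∨ ∃ a : S, s = a * t) ∧ (t = s ∨ ∃ a : S, t = a * s)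

/-- Green's `𝓡` relation: `s 𝓡 t` iff `sS¹ = tS¹`. -/
def GreenR (S : Type*) [SemigroupWithZero S] (s t : S) : Prop :=
  (s = t ∨ ∃ a : S, s = t * a) ∧ (t = s ∨ ∃ a : S, t = s * a)


/-!
If every idempotent `u` factors as `s t` with `s ∈ S_α`, `t ∈ S_{α⁻¹}`, then an element
`x ∈ S_{αβ}` with left local unit `u` is `x = s (t x) ∈ S_α S_β`; so strong grading is the
same as every idempotent lying in all the products `S_α S_{α⁻¹}`.

In an inverse semigroup inversion maps `S_α` to `S_{α⁻¹}`, and an idempotent `u = s t` of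
`S_α S_{α⁻¹}` equals `(u s)(u s)⁻¹` with `u s ∈ S_α`. Hence the idempotents of `S_α S_{α⁻¹}` are
exactly the `s s⁻¹` with `s ∈ S_α`, equivalently the `s⁻¹ s` with `s ∈ S_{α⁻¹}`. Finally an
idempotent is `𝓛`-related to `s` iff it is `s⁻¹ s`, and `𝓡`-related iff it is `s s⁻¹`.
-/

namespace Grading

variable {Γ : Type*} [Group Γ] {S : Type*} [SemigroupWithZero S] (g : Grading Γ S)

theorem mul_mem_comp {α β : Γ} {s t : S} (hs : s ∈ g.comp α) (ht : t ∈ g.comp β) :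
    s * t ∈ g.comp (α * β) := by
  rcases hs with rfl | hs
  · exact Or.inl (zero_mul t)
  rcases ht with rfl | ht
  · exact Or.inl (mul_zero s)
  by_cases hst : s * t = 0
  · exact Or.inl hst
  · exact Or.inr (by rw [g.deg_mul s t hst, hs, ht])

theorem comp_mul_comp_subset (α β : Γ) : g.comp α * g.comp β ⊆ g.comp (α * β) := by
  rintro _ ⟨s, hs, t, ht, rfl⟩
  exact g.mul_mem_comp hs ht

theorem mem_comp_one_of_isIdempotentElem {u : S} (hu : IsIdempotentElem u) : u ∈ g.comp 1 := by
  by_cases hu0 : u = 0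
  · exact Or.inl hu0
  · have hdeg := g.deg_mul u u (by rwa [hu])
    rw [hu, left_eq_mul] at hdeg
    exact Or.inr hdeg

theorem isStrong_iff_forall_isIdempotentElem_mem (hlu : HasLocalUnits S) :
    g.IsStrong ↔ ∀ (α : Γ) (u : S), IsIdempotentElem u → u ∈ g.comp α * g.comp α⁻¹ := by
  refine ⟨fun h α u hu => ?_, fun h α β => ?_⟩
  · rw [h, mul_inv_cancel]
    exact g.mem_comp_one_of_isIdempotentElem hu
  refine (g.comp_mul_comp_subset α β).antisymm fun x hx => ?_
  obtain ⟨u, -, hu, -, hux, -⟩ := hlu x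
  obtain ⟨s, hs, t, ht, rfl⟩ := Set.mem_mul.mp (h α u hu)
  refine Set.mem_mul.mpr ⟨s, hs, t * x, ?_, by rw [← mul_assoc, hux]⟩
  simpa only [inv_mul_cancel_left] using g.mul_mem_comp ht hx

end Grading

structure IsInverseSemigroupInv {S : Type*} [Semigroup S] (inv : S → S) : Prop where
  mul_inv_mul : ∀ s, s * inv s * s = s
  inv_mul_inv : ∀ s, inv s * s * inv s = inv s
  eq_inv : ∀ s t, s * t * s = s → t * s * t = t → t = inv s

namespace IsInverseSemigroupInv

variable {S : Type*} [Semigroup S] {inv : S → S} (h : IsInverseSemigroupInv inv)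
include h

theorem inv_inv (s : S) : inv (inv s) = s :=
  (h.eq_inv (inv s) s (h.inv_mul_inv s) (h.mul_inv_mul s)).symm

theorem inv_eq_self_of_isIdempotentElem {u : S} (hu : IsIdempotentElem u) : inv u = u :=
  (h.eq_inv u u (by rw [hu.eq, hu.eq]) (by rw [hu.eq, hu.eq])).symm

theorem isIdempotentElem_mul_inv (s : S) : IsIdempotentElem (s * inv s) := by
  rw [IsIdempotentElem, ← mul_assoc, h.mul_inv_mul]

theorem isIdempotentElem_inv_mul (s : S) : IsIdempotentElem (inv s * s) := by
  rw [IsIdempotentElem, ← mul_assoc, h.inv_mul_inv]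

theorem isIdempotentElem_mul {e f : S} (he : IsIdempotentElem e) (hf : IsIdempotentElem f) :
    IsIdempotentElem (e * f) := by
  set x := inv (e * f)
  have hx : ∀ z, x * (e * (f * (x * z))) = x * z := fun z => by
    have hxefx : x * (e * f) * x = x := h.inv_mul_inv (e * f)
    conv_rhs => rw [← hxefx]
    simp only [mul_assoc]
  -- `f x e` is a second inverse of `e f`, hence equals `x`; this makes `x` idempotent.
  have hfxe : f * x * e = x := h.eq_inv _ _
    (by simpa only [mul_assoc, he.mul_self_mul, hf.mul_self_mul] using h.mul_inv_mul (e * f))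
    (by simp only [mul_assoc, he.mul_self_mul, hf.mul_self_mul, hx])
  have hxx : IsIdempotentElem x := by
    rw [IsIdempotentElem]
    conv_lhs => rw [← hfxe]
    simp only [mul_assoc, hx]
    rw [← mul_assoc, hfxe]
  rw [IsIdempotentElem, h.eq_inv x (e * f) (h.inv_mul_inv _) (h.mul_inv_mul _),
    h.inv_eq_self_of_isIdempotentElem hxx]
  exact hxx

theorem commute_of_isIdempotentElem {e f : S} (he : IsIdempotentElem e)
    (hf : IsIdempotentElem f) : Commute e f := by
  have hef := h.isIdempotentElem_mul he hf
  have hfe := h.isIdempotentElem_mul hf he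
  have key : f * e = inv (e * f) := h.eq_inv _ _
    (by simpa only [mul_assoc, he.mul_self_mul, hf.mul_self_mul] using hef.eq)
    (by simpa only [mul_assoc, he.mul_self_mul, hf.mul_self_mul] using hfe.eq)
  rw [Commute, SemiconjBy, key, h.inv_eq_self_of_isIdempotentElem hef]

theorem mul_inv_rev (s t : S) : inv (s * t) = inv t * inv s := by
  have hcomm := h.commute_of_isIdempotentElem (h.isIdempotentElem_mul_inv t)
    (h.isIdempotentElem_inv_mul s)
  refine (h.eq_inv _ _ ?_ ?_).symm
  · calc s * t * (inv t * inv s) * (s * t)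
        = s * ((t * inv t) * (inv s * s)) * t := by simp only [mul_assoc]
      _ = (s * inv s * s) * (t * inv t * t) := by rw [hcomm.eq]; simp only [mul_assoc]
      _ = s * t := by rw [h.mul_inv_mul, h.mul_inv_mul]
  · calc inv t * inv s * (s * t) * (inv t * inv s)
        = inv t * ((inv s * s) * (t * inv t)) * inv s := by simp only [mul_assoc]
      _ = (inv t * t * inv t) * (inv s * s * inv s) := by rw [← hcomm.eq]; simp only [mul_assoc]
      _ = inv t * inv s := by rw [h.inv_mul_inv, h.inv_mul_inv]

end IsInverseSemigroupInv

theorem setOf_isIdempotentElem_eq_iff {S : Type*} [Mul S] {f : S → S}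
    (hf : ∀ s, IsIdempotentElem (f s)) (A : Set S) :
    {u : S | IsIdempotentElem u} = {x | ∃ s ∈ A, x = f s} ↔
      ∀ u, IsIdempotentElem u → ∃ s ∈ A, u = f s := by
  simp only [Set.ext_iff, Set.mem_ofPred_eq]
  refine ⟨fun hE u => (hE u).1, fun hE u => ⟨hE u, ?_⟩⟩
  rintro ⟨s, -, rfl⟩
  exact hf s

theorem mul_eq_of_left_multiple {S : Type*} [Semigroup S] {x y e : S}
    (hxy : x = y ∨ ∃ a, x = a * y) (hy : y * e = y) : x * e = x := by
  rcases hxy with rfl | ⟨a, rfl⟩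
  · exact hy
  · rw [mul_assoc, hy]

theorem mul_eq_of_right_multiple {S : Type*} [Semigroup S] {x y e : S}
    (hxy : x = y ∨ ∃ a, x = y * a) (hy : e * y = y) : e * x = x := by
  rcases hxy with rfl | ⟨a, rfl⟩
  · exact hy
  · rw [← mul_assoc, hy]

namespace IsInverseSemigroupInv

variable {S : Type*} [SemigroupWithZero S] {inv : S → S} (h : IsInverseSemigroupInv inv)
include h

theorem greenL_iff {u s : S} (hu : IsIdempotentElem u) : GreenL S u s ↔ u = inv s * s := by
  refine ⟨fun hL => ?_, ?_⟩
  · have hu_unit : u * (inv s * s) = u :=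
      mul_eq_of_left_multiple hL.1 (by rw [← mul_assoc, h.mul_inv_mul])
    have hs_unit : s * u = s := mul_eq_of_left_multiple hL.2 hu.eq
    calc u = u * (inv s * s) := hu_unit.symm
      _ = inv s * (s * u) := by
        rw [(h.commute_of_isIdempotentElem hu (h.isIdempotentElem_inv_mul s)).eq, mul_assoc]
      _ = inv s * s := by rw [hs_unit]
  · rintro rfl
    exact ⟨Or.inr ⟨inv s, rfl⟩, Or.inr ⟨s, by rw [← mul_assoc, h.mul_inv_mul]⟩⟩

theorem greenR_iff {u s : S} (hu : IsIdempotentElem u) : GreenR S u s ↔ u = s * inv s := by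
  refine ⟨fun hR => ?_, ?_⟩
  · have hu_unit : s * inv s * u = u := mul_eq_of_right_multiple hR.1 (h.mul_inv_mul s)
    have hs_unit : u * s = s := mul_eq_of_right_multiple hR.2 hu.eq
    calc u = s * inv s * u := hu_unit.symm
      _ = u * s * inv s := by
        rw [← (h.commute_of_isIdempotentElem hu (h.isIdempotentElem_mul_inv s)).eq, mul_assoc]
      _ = s * inv s := by rw [hs_unit]
  · rintro rfl
    exact ⟨Or.inr ⟨inv s, rfl⟩, Or.inr ⟨s, (h.mul_inv_mul s).symm⟩⟩

end IsInverseSemigroupInv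

namespace Grading

variable {Γ : Type*} [Group Γ] {S : Type*} [SemigroupWithZero S] (g : Grading Γ S)
  {inv : S → S} (h : IsInverseSemigroupInv inv)
include h

theorem inv_mem_comp {α : Γ} {s : S} (hs : s ∈ g.comp α) : inv s ∈ g.comp α⁻¹ := by
  by_cases hs0 : s = 0
  · exact Or.inl (by rw [← h.inv_mul_inv s, hs0, mul_zero, zero_mul])
  have hsis : s * inv s * s ≠ 0 := by rwa [h.mul_inv_mul]
  have hsi : s * inv s ≠ 0 := fun h0 => hsis (by rw [h0, zero_mul])
  have hdeg := g.deg_mul _ _ hsis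
  rw [g.deg_mul _ _ hsi, h.mul_inv_mul, mul_assoc, left_eq_mul] at hdeg
  exact Or.inr (by rw [eq_inv_of_mul_eq_one_left hdeg, hs.resolve_left hs0])

theorem mem_comp_mul_comp_inv_iff {α : Γ} {u : S} (hu : IsIdempotentElem u) :
    u ∈ g.comp α * g.comp α⁻¹ ↔ ∃ s ∈ g.comp α, u = s * inv s := by
  refine ⟨fun hmem => ?_, ?_⟩
  · obtain ⟨s, hs, t, ht, rfl⟩ := Set.mem_mul.mp hmem
    -- The witness is `u s`, using `s s⁻¹ u = u` and `u⁻¹ = u`.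
    have hus : s * t * s ∈ g.comp α := by
      simpa only [mul_inv_cancel, one_mul] using g.mul_mem_comp (g.mul_mem_comp hs ht) hs
    refine ⟨s * t * s, hus, ?_⟩
    have hsu : s * inv s * (s * t) = s * t := by rw [← mul_assoc, h.mul_inv_mul]
    calc s * t = s * t * (s * inv s * (s * t)) := by rw [hsu, hu.eq]
      _ = s * t * s * inv (s * t * s) := by
        rw [h.mul_inv_rev, h.inv_eq_self_of_isIdempotentElem hu]
        simp only [mul_assoc]
  · rintro ⟨s, hs, rfl⟩
    exact Set.mul_mem_mul hs (g.inv_mem_comp h hs)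

theorem exists_inv_mul_iff {α : Γ} {u : S} :
    (∃ s ∈ g.comp α, u = inv s * s) ↔ ∃ s ∈ g.comp α⁻¹, u = s * inv s := by
  constructor
  · rintro ⟨s, hs, rfl⟩
    exact ⟨inv s, g.inv_mem_comp h hs, by rw [h.inv_inv]⟩
  · rintro ⟨s, hs, rfl⟩
    exact ⟨inv s, by simpa only [inv_inv] using g.inv_mem_comp h hs, by rw [h.inv_inv]⟩

variable (hlu : HasLocalUnits S)
include hlu

theorem isStrong_iff_forall_exists_mul_inv :
    g.IsStrong ↔ ∀ (α : Γ) (u : S), IsIdempotentElem u → ∃ s ∈ g.comp α, u = s * inv s := by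
  rw [g.isStrong_iff_forall_isIdempotentElem_mem hlu]
  exact forall_congr' fun α => forall_congr' fun u => forall_congr' fun hu =>
    g.mem_comp_mul_comp_inv_iff h hu

theorem isStrong_iff_forall_exists_inv_mul :
    g.IsStrong ↔ ∀ (α : Γ) (u : S), IsIdempotentElem u → ∃ s ∈ g.comp α, u = inv s * s := by
  rw [g.isStrong_iff_forall_exists_mul_inv h hlu, inv_surjective.forall]
  simp only [g.exists_inv_mul_iff h]

end Grading

/-- Characterisations of strongly graded semigroups with local units
(Proposition `hgfgftgr`): (1) strongly graded; (2) `S_α S_{α⁻¹} = S_ε`;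
(3) `S_α S_{α⁻¹}` contains all the local units (idempotents) of `S`;
and, when `S` is an inverse semigroup (with inverse map `inv`):
(4) `E(S) = {s s⁻¹ | s ∈ S_α}`; (5) `E(S) = {s⁻¹ s | s ∈ S_α}`;
(6) every idempotent is `𝓛`-related to an element of `S_α`;
(7) every idempotent is `𝓡`-related to an element of `S_α`. -/
theorem strongly_graded_tfae {Γ : Type u} [Group Γ] {S : Type v} [SemigroupWithZero S]
    (g : Grading Γ S) (hlu : HasLocalUnits S) :
    ((g.IsStrong ↔ ∀ α : Γ, g.comp α * g.comp α⁻¹ = g.comp 1) ∧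
     (g.IsStrong ↔ ∀ (α : Γ) (u : S), u * u = u → u ∈ g.comp α * g.comp α⁻¹)) ∧
    (∀ inv : S → S,
      (∀ s : S, s * inv s * s = s ∧ inv s * s * inv s = inv s) →
      (∀ s t : S, s * t * s = s → t * s * t = t → t = inv s) →
      ((g.IsStrong ↔
          ∀ α : Γ, {u : S | u * u = u} = {x : S | ∃ s ∈ g.comp α, x = s * inv s}) ∧
       (g.IsStrong ↔
          ∀ α : Γ, {u : S | u * u = u} = {x : S | ∃ s ∈ g.comp α, x = inv s * s}) ∧
       (g.IsStrong ↔
          ∀ (u : S) (α : Γ), u * u = u → ∃ s ∈ g.comp α, GreenL S u s) ∧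
       (g.IsStrong ↔
          ∀ (u : S) (α : Γ), u * u = u → ∃ s ∈ g.comp α, GreenR S u s))) := by
  have h3 := g.isStrong_iff_forall_isIdempotentElem_mem hlu
  refine ⟨⟨⟨fun hs α => by rw [hs, mul_inv_cancel], fun h2 => h3.2 fun α u hu => ?_⟩, h3⟩,
    fun inv hinv huniq => ?_⟩
  · rw [h2 α]
    exact g.mem_comp_one_of_isIdempotentElem hu
  have h : IsInverseSemigroupInv inv := ⟨fun s => (hinv s).1, fun s => (hinv s).2, huniq⟩
  rw [forall_comm (α := S), forall_comm (α := S)]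
  simp +contextual only [← isIdempotentElem_iff,
    setOf_isIdempotentElem_eq_iff h.isIdempotentElem_mul_inv,
    setOf_isIdempotentElem_eq_iff h.isIdempotentElem_inv_mul, h.greenL_iff, h.greenR_iff]
  exact ⟨g.isStrong_iff_forall_exists_mul_inv h hlu, g.isStrong_iff_forall_exists_inv_mul h hlu,
    g.isStrong_iff_forall_exists_inv_mul h hlu, g.isStrong_iff_forall_exists_mul_inv h hlu⟩
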